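/- Let m ≥ 2, n ≥ 1, let p : Fin m → Fin n → ℕ be positive processing times, and let σ be a feasible sequence. Then Σ_{i=0}^{m−2} p i (σ 0) + Σ_{j=0}^{n−1} p (m−1) (σ j) = Σ_{j=0}^{n−1} p 0 (σ j) + Σ_{i=1}^{m−1} p i (σ (n−1)); in particular the makespan of the induced no-idle/no-wait schedule equals the sum of the processing times of the first job on machines 1 through m−1 plus the total processing load of the last machine. -/
import Mathlib


/-- A sequence `σ` for an m-machine no-idle/no-wait flow shop instance is feasible if
`p (i+1) (σ j) = p i (σ (j+1))` for every machine `i` with `i+1 < m` and every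
position `j` with `j+1 < n`. -/
def FeasibleSeqM (m n : ℕ) (p : Fin m → Fin n → ℕ) (σ : Fin n ≃ Fin n) : Prop :=
  ∀ i : Fin m, ∀ hi : (i : ℕ) + 1 < m, ∀ j : Fin n, ∀ hj : (j : ℕ) + 1 < n,
    p ⟨(i : ℕ) + 1, hi⟩ (σ j) = p i (σ ⟨(j : ℕ) + 1, hj⟩)

lemma sum_range_add' (f : ℕ → ℕ) (a b : ℕ) :
    ∑ s ∈ Finset.range (a + b), f s
      = (∑ s ∈ Finset.range a, f s) + ∑ t ∈ Finset.range b, f (a + t) := by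
  induction b with
  | zero => simp
  | succ b ih => rw [Nat.add_succ, Finset.sum_range_succ, Finset.sum_range_succ, ih]; ring

set_option maxHeartbeats 1000000 in
/-- for a feasible sequence of an m-machine instance,
`Σ_{i=0}^{m-2} p i (σ 0) + Σ_j p (m-1) (σ j) = Σ_j p 0 (σ j) + Σ_{i=1}^{m-1} p i (σ (n-1))`;
in particular the makespan equals the sum of the first job's processing times on
machines `1,…,m-1` plus the total load `Σ_j p (m-1) j` of the last machine. -/
theorem stmt_12 (m n : ℕ) (hm : 2 ≤ m) (hn : 1 ≤ n)
    (p : Fin m → Fin n → ℕ) (hp : ∀ i j, 0 < p i j)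
    (σ : Fin n ≃ Fin n) (hσ : FeasibleSeqM m n p σ) :
    ((∑ i ∈ Finset.univ.filter (fun i : Fin m => (i : ℕ) + 1 < m), p i (σ ⟨0, by omega⟩))
          + ∑ j, p ⟨m - 1, by omega⟩ (σ j)
        = (∑ j, p ⟨0, by omega⟩ (σ j))
          + ∑ i ∈ Finset.univ.filter (fun i : Fin m => 1 ≤ (i : ℕ)), p i (σ ⟨n - 1, by omega⟩))
    ∧ ((∑ i ∈ Finset.univ.filter (fun i : Fin m => (i : ℕ) + 1 < m), p i (σ ⟨0, by omega⟩))
          + ∑ j, p ⟨m - 1, by omega⟩ (σ j)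
        = (∑ i ∈ Finset.univ.filter (fun i : Fin m => (i : ℕ) + 1 < m), p i (σ ⟨0, by omega⟩))
          + ∑ j, p ⟨m - 1, by omega⟩ j) := by
  have step : ∀ (i j : ℕ) (h1 : i + 1 < m) (h2 : j + 1 < n),
      p ⟨i + 1, h1⟩ (σ ⟨j, by omega⟩) = p ⟨i, by omega⟩ (σ ⟨j + 1, h2⟩) :=
    fun i j h1 h2 => hσ ⟨i, by omega⟩ h1 ⟨j, by omega⟩ h2
  have diag : ∀ (k i j : ℕ) (h1 : i + k < m) (h2 : j < n) (h3 : i < m) (h4 : j + k < n),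
      p ⟨i + k, h1⟩ (σ ⟨j, h2⟩) = p ⟨i, h3⟩ (σ ⟨j + k, h4⟩) := by
    intro k
    induction k with
    | zero => intro i j h1 h2 h3 h4; rfl
    | succ k ih =>
      intro i j h1 h2 h3 h4
      have e1 : p ⟨i + (k + 1), h1⟩ (σ ⟨j, h2⟩)
          = p ⟨i + k, by omega⟩ (σ ⟨j + 1, by omega⟩) := step (i + k) j (by omega) (by omega)
      rw [e1, ih i (j + 1) (by omega) (by omega) h3 (by omega)]
      exact congrArg _ (congrArg σ (Fin.mk_eq_mk.mpr (by omega)))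
  have eqgen : ∀ (i j i' j' : ℕ) (h1 : i < m) (h2 : j < n) (h3 : i' < m) (h4 : j' < n),
      i + j = i' + j' → p ⟨i, h1⟩ (σ ⟨j, h2⟩) = p ⟨i', h3⟩ (σ ⟨j', h4⟩) := by
    intro i j i' j' h1 h2 h3 h4 hs
    rcases Nat.le_total i i' with h | h
    · have hi' : i' = i + (i' - i) := by omega
      have hj : j = j' + (i' - i) := by omega
      rw [show (⟨i', h3⟩ : Fin m) = ⟨i + (i' - i), by omega⟩ from Fin.ext hi',
        show (⟨j, h2⟩ : Fin n) = ⟨j' + (i' - i), by omega⟩ from Fin.ext hj] at *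
      exact (diag (i' - i) i j' (by omega) h4 h1 (by omega)).symm
    · have hi' : i = i' + (i - i') := by omega
      have hj : j' = j + (i - i') := by omega
      rw [show (⟨i, h1⟩ : Fin m) = ⟨i' + (i - i'), by omega⟩ from Fin.ext hi',
        show (⟨j', h4⟩ : Fin n) = ⟨j + (i - i'), by omega⟩ from Fin.ext hj]
      exact diag (i - i') i' j (by omega) h2 h3 (by omega)
  obtain ⟨F, fspec⟩ : ∃ F : ℕ → ℕ, ∀ (i j : ℕ) (h1 : i < m) (h2 : j < n),
      F (i + j) = p ⟨i, h1⟩ (σ ⟨j, h2⟩) := by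
    refine ⟨fun s => if h : s < m + n - 1 then
      p ⟨min s (m - 1), by omega⟩ (σ ⟨s - min s (m - 1), by omega⟩) else 0, ?_⟩
    intro i j h1 h2
    have hs : i + j < m + n - 1 := by omega
    simp only [hs, dif_pos]
    exact eqgen _ _ i j (by omega) (by omega) h1 h2 (by omega)
  -- the four sums
  have hA : (∑ i ∈ Finset.univ.filter (fun i : Fin m => (i : ℕ) + 1 < m), p i (σ ⟨0, by omega⟩))
      = ∑ s ∈ Finset.range (m - 1), F s := by
    rw [Finset.sum_filter]
    have : ∀ i : Fin m, (if (i : ℕ) + 1 < m then p i (σ ⟨0, by omega⟩) else 0)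
        = (fun s => if s + 1 < m then F s else 0) (i : ℕ) := by
      intro i
      by_cases h : (i : ℕ) + 1 < m
      · simp only [h, if_pos]
        rw [show (i : ℕ) = (i : ℕ) + 0 from rfl, fspec _ _ i.isLt (by omega)]
      · simp [h]
    rw [Finset.sum_congr rfl (fun i _ => this i),
      Fin.sum_univ_eq_sum_range (fun s => if s + 1 < m then F s else 0) m]
    rw [show m = (m - 1) + 1 by omega, Finset.sum_range_succ]
    simp only [show ¬ ((m - 1) + 1 < (m - 1) + 1) from by omega, if_false, add_zero]
    refine Finset.sum_congr rfl fun s hs => ?_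
    rw [if_pos (by simp at hs; omega)]
  have hB : (∑ j, p (⟨m - 1, by omega⟩ : Fin m) (σ j)) = ∑ t ∈ Finset.range n, F (m - 1 + t) := by
    have : ∀ j : Fin n, p (⟨m - 1, by omega⟩ : Fin m) (σ j) = (fun t => F (m - 1 + t)) (j : ℕ) := by
      intro j
      exact (fspec (m - 1) (j : ℕ) (by omega) j.isLt).symm
    rw [Finset.sum_congr rfl (fun j _ => this j)]
    exact Fin.sum_univ_eq_sum_range (fun t => F (m - 1 + t)) n
  have hC : (∑ j, p (⟨0, by omega⟩ : Fin m) (σ j)) = ∑ t ∈ Finset.range n, F t := by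
    have : ∀ j : Fin n, p (⟨0, by omega⟩ : Fin m) (σ j) = (fun t => F t) (j : ℕ) := by
      intro j
      have h := fspec 0 (j : ℕ) (by omega) j.isLt
      rw [Nat.zero_add] at h
      exact h.symm
    rw [Finset.sum_congr rfl (fun j _ => this j)]
    exact Fin.sum_univ_eq_sum_range (fun t => F t) n
  have hD : (∑ i ∈ Finset.univ.filter (fun i : Fin m => 1 ≤ (i : ℕ)), p i (σ ⟨n - 1, by omega⟩))
      = ∑ t ∈ Finset.range (m - 1), F (n + t) := by
    have this1 : ∀ i : Fin m, (if 1 ≤ (i : ℕ) then p i (σ ⟨n - 1, by omega⟩) else 0)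
        = if 1 ≤ (i : ℕ) then F ((i : ℕ) + (n - 1)) else 0 := by
      intro i
      by_cases h : 1 ≤ (i : ℕ)
      · simp only [h, if_pos]
        exact (fspec (i : ℕ) (n - 1) i.isLt (by omega)).symm
      · simp [h]
    have this2 : (∑ i ∈ Finset.univ.filter (fun i : Fin m => 1 ≤ (i : ℕ)),
          p i (σ ⟨n - 1, by omega⟩))
        = ∑ s ∈ Finset.range m, (if 1 ≤ s then F (s + (n - 1)) else 0) := by
      rw [Finset.sum_filter]
      exact (Finset.sum_congr rfl fun i _ => this1 i).trans
        (Fin.sum_univ_eq_sum_range (fun s => if 1 ≤ s then F (s + (n - 1)) else 0) m)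
    rw [this2, show m = (m - 1) + 1 by omega, Finset.sum_range_succ']
    simp only [show ¬ (1 ≤ 0) from by omega, if_false, add_zero]
    refine Finset.sum_congr rfl fun s hs => ?_
    rw [if_pos (by omega)]
    congr 1
    omega
  constructor
  · rw [hA, hB, hC, hD, ← sum_range_add' F (m - 1) n, ← sum_range_add' F n (m - 1),
      show (m - 1) + n = n + (m - 1) by omega]
  · exact congrArg (HAdd.hAdd _) (Equiv.sum_comp σ (p ⟨m - 1, by omega⟩))
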